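/- arXiv:1206.5956 — 2 statements merged into one kernel-verified Lean document; each statement's English description precedes it below -/
import Mathlib

section
/- Let f^1,...,f^m be monomials in S = k[x_1,...,x_d] with m ≥ 2. Fix 1 ≤ μ < ν ≤ m and set β = (f^{μ,ν}/f^ν)e_ν − (f^{μ,ν}/f^μ)e_μ where f^{μ,ν} = lcm(f^μ,f^ν). Then for any s ∈ S, the element s·β lies in the S-submodule generated by the remaining elements {β_{(μ',ν')} : (μ',ν') ≠ (μ,ν), μ' < ν'} together with β only if s·β already lies in the intersection ⟨β_{(μ',ν')} : (μ',ν') ≠ (μ,ν)⟩ ∩ ⟨β⟩, and this intersection is of the form I·β for a monomial ideal I ⊆ S. -/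
/-!
Give `ι → k[σ]` the grading in which `e_i` has degree `a i` (the exponent of `f^i`). Every
`β_{(μ',ν')}` is homogeneous of degree `a μ' ⊔ a ν'`, so the submodule `N` they span is graded:
taking the degree-`(b + deg β)` component of `s • β ∈ N` shows `x^b • β ∈ N` for every monomial
`x^b` of `s`. Hence the colon ideal `{s | s • β ∈ N}` is a monomial ideal `I`, and
`N ⊓ ⟨β⟩ = I • β`.
-/

open MvPolynomial

namespace MvPolynomial

variable {R σ : Type*} [CommSemiring R]

/-- The term of `p` of degree `t - e`, i.e. `x^{-e}` times the degree-`t` term of `x^e * p`;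
it is `0` unless `e ≤ t`, which sidesteps the truncated subtraction `t - e`. -/
noncomputable def shiftedTerm (t e : σ →₀ ℕ) : MvPolynomial σ R →ₗ[R] MvPolynomial σ R :=
  if e ≤ t then monomial (t - e) ∘ₗ lcoeff R (t - e) else 0

theorem shiftedTerm_apply (t e : σ →₀ ℕ) (p : MvPolynomial σ R) :
    shiftedTerm t e p = if e ≤ t then monomial (t - e) (coeff (t - e) p) else 0 := by
  unfold shiftedTerm
  split_ifs <;> rfl

theorem shiftedTerm_mul_monomial (t e u : σ →₀ ℕ) (p : MvPolynomial σ R) :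
    shiftedTerm t e (p * monomial u 1) = shiftedTerm t (u + e) p * monomial u 1 := by
  rw [shiftedTerm_apply, shiftedTerm_apply]
  by_cases hue : u + e ≤ t
  · have he : e ≤ t := le_trans le_add_self hue
    have hu : u ≤ t - e := (le_tsub_iff_right he).mpr hue
    rw [if_pos he, if_pos hue, coeff_mul_monomial', if_pos hu, monomial_mul, mul_one, mul_one,
      add_comm u e, ← tsub_tsub, tsub_add_cancel_of_le hu]
  · rw [if_neg hue, zero_mul]
    split_ifs with he
    · rw [coeff_mul_monomial', if_neg fun hu => hue ((le_tsub_iff_right he).mp hu), map_zero]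
    · rfl

theorem eq_span_monomial_of_monomial_mem (I : Ideal (MvPolynomial σ R))
    (hI : ∀ p ∈ I, ∀ b ∈ p.support, monomial b 1 ∈ I) :
    I = Ideal.span ((fun b => monomial b (1 : R)) '' {b | monomial b 1 ∈ I}) := by
  refine le_antisymm (fun p hp => ?_) (Ideal.span_le.mpr ?_)
  · rw [← support_sum_monomial_coeff p]
    refine Ideal.sum_mem _ fun b hb => ?_
    rw [← mul_one (coeff b p), ← C_mul_monomial]
    exact Ideal.mul_mem_left _ _ (Ideal.subset_span ⟨b, hI p hp b hb, rfl⟩)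
  · rintro _ ⟨b, hb, rfl⟩
    exact hb

end MvPolynomial

namespace MonomialSyzygy

variable {R σ ι : Type*}

section CommSemiring

variable [CommSemiring R]

/-- The degree-`t` component of a vector, for the grading of `ι → R[σ]` in which the basis
vector `e_i` has degree `a i`. -/
noncomputable def degreeComponent (a : ι → σ →₀ ℕ) (t : σ →₀ ℕ) :
    (ι → MvPolynomial σ R) →ₗ[R] (ι → MvPolynomial σ R) :=
  LinearMap.pi fun i => shiftedTerm t (a i) ∘ₗ LinearMap.proj i

theorem degreeComponent_apply (a : ι → σ →₀ ℕ) (t : σ →₀ ℕ) (v : ι → MvPolynomial σ R) (i : ι) :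
    degreeComponent a t v i = shiftedTerm t (a i) (v i) :=
  rfl

/-- Homogeneity of degree `e`, in the form that survives multiplication by scalars. -/
def HomogeneousOfDegree (a : ι → σ →₀ ℕ) (e : σ →₀ ℕ) (x : ι → MvPolynomial σ R) : Prop :=
  ∀ (t : σ →₀ ℕ) (c : MvPolynomial σ R), degreeComponent a t (c • x) = shiftedTerm t e c • x

theorem homogeneousOfDegree_single [DecidableEq ι] (a : ι → σ →₀ ℕ) (u : σ →₀ ℕ) (j : ι) :
    HomogeneousOfDegree a (u + a j) (Pi.single j (monomial u (1 : R))) := by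
  intro t c
  funext i
  rcases eq_or_ne i j with rfl | hij
  · simp [degreeComponent_apply, shiftedTerm_mul_monomial]
  · simp [degreeComponent_apply, hij]

theorem degreeComponent_mem_span (a : ι → σ →₀ ℕ) (t : σ →₀ ℕ) {T : Set (ι → MvPolynomial σ R)}
    (hT : ∀ x ∈ T, ∃ e, HomogeneousOfDegree a e x) {v : ι → MvPolynomial σ R}
    (hv : v ∈ Submodule.span (MvPolynomial σ R) T) :
    degreeComponent a t v ∈ Submodule.span (MvPolynomial σ R) T := by
  -- `degreeComponent` is only `R`-linear, so the induction has to carry all multiples of `v`.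
  suffices ∀ c : MvPolynomial σ R, degreeComponent a t (c • v) ∈ Submodule.span _ T by
    simpa using this 1
  induction hv using Submodule.span_induction with
  | mem x hx =>
    obtain ⟨e, hxe⟩ := hT x hx
    exact fun c => hxe t c ▸ Submodule.smul_mem _ _ (Submodule.subset_span hx)
  | zero => simp
  | add x y _ _ hx hy =>
    exact fun c => by simpa only [smul_add, map_add] using add_mem (hx c) (hy c)
  | smul c' x _ hx => exact fun c => by simpa only [smul_smul] using hx (c * c')

end CommSemiring

/-- The syzygy `β_{(μ,ν)} = (f^{μ,ν}/f^ν) e_ν − (f^{μ,ν}/f^μ) e_μ` of the monomials `x^{a i}`. -/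
noncomputable def syzygy [CommRing R] [DecidableEq ι] (a : ι → σ →₀ ℕ) (μ ν : ι) :
    ι → MvPolynomial σ R :=
  Pi.single ν (monomial (a μ ⊔ a ν - a ν) 1) - Pi.single μ (monomial (a μ ⊔ a ν - a μ) 1)

theorem homogeneousOfDegree_syzygy [CommRing R] [DecidableEq ι] (a : ι → σ →₀ ℕ) (μ ν : ι) :
    HomogeneousOfDegree a (a μ ⊔ a ν) (syzygy (R := R) a μ ν) := by
  intro t c
  have hν := homogeneousOfDegree_single (R := R) a (a μ ⊔ a ν - a ν) ν t c
  have hμ := homogeneousOfDegree_single (R := R) a (a μ ⊔ a ν - a μ) μ t c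
  rw [tsub_add_cancel_of_le le_sup_right] at hν
  rw [tsub_add_cancel_of_le le_sup_left] at hμ
  rw [syzygy, smul_sub, map_sub, hν, hμ, smul_sub]

section Field

variable {K : Type*} [Field K]

theorem monomial_smul_mem_of_smul_mem {a : ι → σ →₀ ℕ} {T : Set (ι → MvPolynomial σ K)}
    (hT : ∀ y ∈ T, ∃ e, HomogeneousOfDegree a e y) {e : σ →₀ ℕ} {x : ι → MvPolynomial σ K}
    (hx : HomogeneousOfDegree a e x) {s : MvPolynomial σ K}
    (hs : s • x ∈ Submodule.span (MvPolynomial σ K) T) {b : σ →₀ ℕ} (hb : b ∈ s.support) :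
    monomial b (1 : K) • x ∈ Submodule.span (MvPolynomial σ K) T := by
  have hcomp := degreeComponent_mem_span a (b + e) hT hs
  rw [hx, shiftedTerm_apply, if_pos le_add_self, add_tsub_cancel_right] at hcomp
  have hc : coeff b s ≠ 0 := mem_support_iff.mp hb
  have hunit : monomial b (1 : K) = C (coeff b s)⁻¹ * monomial b (coeff b s) := by
    rw [C_mul_monomial, inv_mul_cancel₀ hc]
  rw [hunit, mul_smul]
  exact Submodule.smul_mem _ _ hcomp

theorem exists_inf_span_singleton_eq_map_span_monomial {a : ι → σ →₀ ℕ}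
    {T : Set (ι → MvPolynomial σ K)} (hT : ∀ y ∈ T, ∃ e, HomogeneousOfDegree a e y)
    {e : σ →₀ ℕ} {x : ι → MvPolynomial σ K} (hx : HomogeneousOfDegree a e x) :
    ∃ G : Set (σ →₀ ℕ),
      Submodule.span (MvPolynomial σ K) T ⊓ Submodule.span (MvPolynomial σ K) {x} =
        Submodule.map (LinearMap.toSpanSingleton (MvPolynomial σ K) _ x)
          (Ideal.span ((fun b => monomial b (1 : K)) '' G)) := by
  set I : Ideal (MvPolynomial σ K) :=
    (Submodule.span (MvPolynomial σ K) T).comap (LinearMap.toSpanSingleton _ _ x)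
  have hI : I = Ideal.span ((fun b => monomial b (1 : K)) '' {b | monomial b 1 ∈ I}) :=
    eq_span_monomial_of_monomial_mem I fun s hs b hb => monomial_smul_mem_of_smul_mem hT hx hs hb
  refine ⟨{b | monomial b 1 ∈ I}, ?_⟩
  rw [← hI, Submodule.map_comap_eq, LinearMap.range_toSpanSingleton, inf_comm]

end Field

end MonomialSyzygy

open MonomialSyzygy in
theorem stmt8_general {K : Type*} [Field K] (d m : ℕ)
    (a : Fin m → (Fin d →₀ ℕ)) (μ ν : Fin m) :
    (letI S := MvPolynomial (Fin d) K
     letI β : Fin m → Fin m → (Fin m → S) := fun μ' ν' =>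
       Pi.single ν' (monomial (a μ' ⊔ a ν' - a ν') (1 : K))
         - Pi.single μ' (monomial (a μ' ⊔ a ν' - a μ') (1 : K))
     letI N : Submodule S (Fin m → S) := Submodule.span S
       { b | ∃ μ' ν' : Fin m, μ' < ν' ∧ (μ', ν') ≠ (μ, ν) ∧ b = β μ' ν' }
     (∀ s : S, s • β μ ν ∈ N → s • β μ ν ∈ N ⊓ Submodule.span S {β μ ν}) ∧
       ∃ G : Set (Fin d →₀ ℕ),
         N ⊓ Submodule.span S {β μ ν}
           = Submodule.map (LinearMap.toSpanSingleton S (Fin m → S) (β μ ν))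
               (Ideal.span ((fun b => monomial b (1 : K)) '' G))) := by
  have hT : ∀ y ∈ {b | ∃ μ' ν' : Fin m, μ' < ν' ∧ (μ', ν') ≠ (μ, ν) ∧ b = syzygy (R := K) a μ' ν'},
      ∃ e, HomogeneousOfDegree a e y := by
    rintro _ ⟨μ', ν', -, -, rfl⟩
    exact ⟨_, homogeneousOfDegree_syzygy a μ' ν'⟩
  exact ⟨fun s hs => ⟨hs, Submodule.smul_mem _ s (Submodule.mem_span_singleton_self _)⟩,
    exists_inf_span_singleton_eq_map_span_monomial hT (homogeneousOfDegree_syzygy a μ ν)⟩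

/-- For fixed `μ < ν` and `β = β_{(μ,ν)}`, an element `s·β` lies in the submodule `N` generated by
the remaining generators `β_{(μ',ν')}` (together with `β`) only if it lies in the intersection
`N ⊓ ⟨β⟩`, and this intersection is of the form `I·β` for a monomial ideal `I ⊆ S`.
Here `a μ` is the exponent vector of the monomial `f^μ` and
`β_{(μ,ν)} = (f^{μ,ν}/f^ν) e_ν − (f^{μ,ν}/f^μ) e_μ`. -/
theorem stmt8 {K : Type*} [Field K] (d m : ℕ) (hm : 2 ≤ m)
    (a : Fin m → (Fin d →₀ ℕ)) (μ ν : Fin m) (hμν : μ < ν) :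
    (letI S := MvPolynomial (Fin d) K
     letI β : Fin m → Fin m → (Fin m → S) := fun μ' ν' =>
       Pi.single ν' (monomial (a μ' ⊔ a ν' - a ν') (1 : K))
         - Pi.single μ' (monomial (a μ' ⊔ a ν' - a μ') (1 : K))
     letI N : Submodule S (Fin m → S) := Submodule.span S
       { b | ∃ μ' ν' : Fin m, μ' < ν' ∧ (μ', ν') ≠ (μ, ν) ∧ b = β μ' ν' }
     (∀ s : S, s • β μ ν ∈ N → s • β μ ν ∈ N ⊓ Submodule.span S {β μ ν}) ∧
       ∃ G : Set (Fin d →₀ ℕ),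
         N ⊓ Submodule.span S {β μ ν}
           = Submodule.map (LinearMap.toSpanSingleton S (Fin m → S) (β μ ν))
               (Ideal.span ((fun b => monomial b (1 : K)) '' G))) :=
  stmt8_general d m a μ ν
end

section
/- Let f^1,...,f^m be monomials in S and, for 1 ≤ k ≤ n = binom(m,2), let F^k = ⟨β_1,...,β_k⟩ with β_j = β_{(μ_j,ν_j)} ordered as: τ_1=(1,2),...,τ_{m−1}=(m−1,m), τ_m=(1,m), then τ_{m+1}=(1,3),...,τ_{2m−3}=(1,m−1), then the rest lexicographically. Then for m+1 ≤ k ≤ 2m−3, the quotient F^k/F^{k−1} is isomorphic to S/I_k, where I_k = ⟨ f^{1,k−m+2,...,m}/f^{1,k−m+2}, f^{1,k−m+1,k−m+2}/f^{1,k−m+2} ⟩; here f^{i_1,...,i_r} = lcm(f^{i_1},...,f^{i_r}). -/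
/-!
Indices start at `0`, so `τ_k = (0,t)`. Write `x^u` for `monomial u 1` and view the generators
`β_{(μ,ν)}` as edges of a graph on the indices. Pairing `v ∈ S^m` with a potential `φ` via
`∑ᵢ φᵢ x^{aᵢ} vᵢ` sends `β_{(μ,ν)}` to `(φ_ν - φ_μ) x^{a_μ ⊔ a_ν}`, so for `v` in the span of a set
`E` of edges, `(x^{aᵢ} vᵢ)ᵢ` is the divergence of a flow `w` on `E` with
`x^{a_μ ⊔ a_ν} ∣ w_{(μ,ν)}`. If `r β_{(0,t)} ∈ F^{k-1}`, then for `t ≤ j ≤ m-1` the cut `{i ≥ j}`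
is crossed only by the edges `(j-1,j)` and `(0,m-1)`. So `w` agrees up to sign on the edges of the
cycle `t, t+1, …, m-1, 0`, making `w_{(0,m-1)}` divisible by `f^{0,t,…,m-1}`, and the cut at `t`
gives `r f^{0,t} = w_{(t-1,t)} + w_{(0,m-1)}`; hence `f^0`, and so `f^{0,t-1,t}`, divides
`w_{(t-1,t)}`.
Conversely, both generators of `I_k` multiply `β_{(0,t)}` into `F^{k-1}` because of the triangle
relation `x^{L - a_μ ⊔ a_τ} β_{(μ,τ)} = x^{L - a_μ ⊔ a_ν} β_{(μ,ν)} + x^{L - a_ν ⊔ a_τ} β_{(ν,τ)}`.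
-/

open MvPolynomial

namespace MvPolynomial

variable {σ R : Type*} [CommRing R]

theorem monomial_one_dvd_iff_forall_le {u : σ →₀ ℕ} {p : MvPolynomial σ R} :
    monomial u (1 : R) ∣ p ↔ ∀ s ∈ p.support, u ≤ s := by
  rw [← Ideal.mem_span_singleton, ← Set.image_singleton (f := fun s => monomial s (1 : R)),
    mem_ideal_span_monomial_image]
  simp

theorem monomial_one_sup_dvd {u v : σ →₀ ℕ} {p : MvPolynomial σ R}
    (hu : monomial u (1 : R) ∣ p) (hv : monomial v (1 : R) ∣ p) :
    monomial (u ⊔ v) (1 : R) ∣ p := by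
  rw [monomial_one_dvd_iff_forall_le] at *
  exact fun s hs => sup_le (hu s hs) (hv s hs)

theorem monomial_one_finset_sup_dvd {ι : Type*} {s : Finset ι} {f : ι → σ →₀ ℕ}
    {p : MvPolynomial σ R} (h : ∀ i ∈ s, monomial (f i) (1 : R) ∣ p) :
    monomial (s.sup f) (1 : R) ∣ p := by
  simp_rw [monomial_one_dvd_iff_forall_le] at *
  exact fun x hx => Finset.sup_le fun i hi => h i hi x hx

theorem monomial_one_dvd_of_le [Nontrivial R] {u v : σ →₀ ℕ} {p : MvPolynomial σ R}
    (huv : u ≤ v) (h : monomial v (1 : R) ∣ p) : monomial u (1 : R) ∣ p :=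
  (monomial_one_dvd_monomial_one.2 huv).trans h

theorem mem_span_pair_of_mul_monomial_eq [IsDomain R] {u v₁ v₂ : σ →₀ ℕ}
    (h₁ : u ≤ v₁) (h₂ : u ≤ v₂) {r p₁ p₂ : MvPolynomial σ R}
    (hp₁ : monomial v₁ (1 : R) ∣ p₁) (hp₂ : monomial v₂ (1 : R) ∣ p₂)
    (h : r * monomial u 1 = p₁ + p₂) :
    r ∈ Ideal.span {monomial (v₁ - u) (1 : R), monomial (v₂ - u) 1} := by
  obtain ⟨q₁, rfl⟩ := hp₁
  obtain ⟨q₂, rfl⟩ := hp₂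
  have hr : r = monomial (v₁ - u) 1 * q₁ + monomial (v₂ - u) 1 * q₂ := by
    refine mul_right_cancel₀ (monomial_eq_zero.not.2 one_ne_zero : monomial u (1 : R) ≠ 0) ?_
    rw [h, add_mul, mul_right_comm, mul_right_comm _ q₂, monomial_mul, monomial_mul, one_mul,
      tsub_add_cancel_of_le h₁, tsub_add_cancel_of_le h₂]
  rw [hr]
  exact add_mem (Ideal.mul_mem_right _ _ (Ideal.subset_span (.inl rfl)))
    (Ideal.mul_mem_right _ _ (Ideal.subset_span (.inr rfl)))

end MvPolynomial

namespace Submodule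

theorem nonempty_quotient_equiv_quotient_comap_toSpanSingleton {R M : Type*} [CommRing R]
    [AddCommGroup M] [Module R M] {N F : Submodule R M} {x : M} (hx : x ∈ F)
    (hF : F ≤ N ⊔ R ∙ x) :
    Nonempty ((F ⧸ N.comap F.subtype) ≃ₗ[R] R ⧸ N.comap (LinearMap.toSpanSingleton R M x)) := by
  let ψ := (N.comap F.subtype).mkQ ∘ₗ LinearMap.toSpanSingleton R F ⟨x, hx⟩
  have hsurj : Function.Surjective ψ := by
    rintro ⟨y, hy⟩
    obtain ⟨n, hn, z, hz, rfl⟩ := mem_sup.1 (hF hy)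
    obtain ⟨r, rfl⟩ := mem_span_singleton.1 hz
    refine ⟨r, (Quotient.eq _).2 ?_⟩
    simpa [ψ] using neg_mem hn
  have hker : LinearMap.ker ψ = N.comap (LinearMap.toSpanSingleton R M x) := by
    ext r
    simp [ψ, Quotient.mk_eq_zero]
  exact ⟨((quotEquivOfEq _ _ hker).symm.trans (ψ.quotKerEquivOfSurjective hsurj)).symm⟩

end Submodule

theorem Fin.succ_sub_one {n : ℕ} (i : Fin n) : i.succ - 1 = i.castSucc :=
  (eq_sub_of_add_eq Fin.coeSucc_eq_succ).symm

namespace MonomialSyzygy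

variable {σ R : Type*} [CommRing R]

section General

variable {ι : Type*} [DecidableEq ι]

noncomputable def syz (a : ι → σ →₀ ℕ) (μ ν : ι) : ι → MvPolynomial σ R :=
  Pi.single ν (monomial (a μ ⊔ a ν - a ν) 1) - Pi.single μ (monomial (a μ ⊔ a ν - a μ) 1)

variable (R) in
noncomputable def syzSpan (a : ι → σ →₀ ℕ) (P : ι → ι → Prop) :
    Submodule (MvPolynomial σ R) (ι → MvPolynomial σ R) :=
  Submodule.span _ {b | ∃ μ ν, P μ ν ∧ b = syz a μ ν}

variable (a : ι → σ →₀ ℕ)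

theorem syz_mem_syzSpan {P : ι → ι → Prop} {μ ν : ι} (h : P μ ν) :
    syz a μ ν ∈ syzSpan R a P :=
  Submodule.subset_span ⟨μ, ν, h, rfl⟩

theorem monomial_smul_syz {L : σ →₀ ℕ} {μ ν : ι} (h : a μ ⊔ a ν ≤ L) :
    (monomial (L - (a μ ⊔ a ν)) (1 : R) • syz a μ ν : ι → MvPolynomial σ R)
      = Pi.single ν (monomial (L - a ν) 1) - Pi.single μ (monomial (L - a μ) 1) := by
  rw [syz, smul_sub, ← Pi.single_smul, ← Pi.single_smul, smul_eq_mul, smul_eq_mul, monomial_mul,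
    monomial_mul, one_mul, tsub_add_tsub_cancel h le_sup_right,
    tsub_add_tsub_cancel h le_sup_left]

theorem monomial_smul_syz_eq_add {L : σ →₀ ℕ} {μ ν τ : ι}
    (hμ : a μ ≤ L) (hν : a ν ≤ L) (hτ : a τ ≤ L) :
    (monomial (L - (a μ ⊔ a τ)) (1 : R) • syz a μ τ : ι → MvPolynomial σ R)
      = monomial (L - (a μ ⊔ a ν)) (1 : R) • syz a μ ν
        + monomial (L - (a ν ⊔ a τ)) (1 : R) • syz a ν τ := by
  rw [monomial_smul_syz a (sup_le hμ hτ), monomial_smul_syz a (sup_le hμ hν),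
    monomial_smul_syz a (sup_le hν hτ)]
  abel

theorem smul_syz_mem_of_mem {N : Submodule (MvPolynomial σ R) (ι → MvPolynomial σ R)}
    {μ ν τ : ι} (hμν : syz a μ ν ∈ N) (hντ : syz a ν τ ∈ N) :
    monomial (a μ ⊔ a ν ⊔ a τ - (a μ ⊔ a τ)) (1 : R) • syz a μ τ ∈ N := by
  rw [monomial_smul_syz_eq_add a (le_sup_left.trans le_sup_left) (le_sup_right.trans le_sup_left)
    le_sup_right]
  exact add_mem (N.smul_mem _ hμν) (N.smul_mem _ hντ)

theorem sum_mul_syz [Fintype ι] (φ : ι → MvPolynomial σ R) (μ ν : ι) :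
    ∑ i, φ i * monomial (a i) 1 * syz a μ ν i = (φ ν - φ μ) * monomial (a μ ⊔ a ν) 1 := by
  simp only [syz, Pi.sub_apply, mul_sub, Finset.sum_sub_distrib, Pi.single_apply, mul_ite,
    mul_zero, Finset.sum_ite_eq', Finset.mem_univ, if_true, mul_assoc, monomial_mul, one_mul]
  rw [add_tsub_cancel_of_le le_sup_right, add_tsub_cancel_of_le le_sup_left]
  ring

theorem exists_flow_of_mem_syzSpan [Fintype ι] {P : ι → ι → Prop} {v : ι → MvPolynomial σ R}
    (hv : v ∈ syzSpan R a P) :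
    ∃ w : ι × ι → MvPolynomial σ R, (∀ p, ¬ P p.1 p.2 → w p = 0) ∧
      (∀ p, monomial (a p.1 ⊔ a p.2) (1 : R) ∣ w p) ∧
      ∀ φ : ι → MvPolynomial σ R,
        ∑ i, φ i * monomial (a i) 1 * v i = ∑ p, (φ p.2 - φ p.1) * w p := by
  induction hv using Submodule.span_induction with
  | mem x hx =>
    obtain ⟨μ, ν, hP, rfl⟩ := hx
    refine ⟨Pi.single (μ, ν) (monomial (a μ ⊔ a ν) 1), fun p hp => ?_, fun p => ?_, fun φ => ?_⟩
    · exact Pi.single_eq_of_ne (by rintro rfl; exact hp hP) _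
    · by_cases hp : p = (μ, ν)
      · simp [hp]
      · simp [Pi.single_eq_of_ne hp]
    · simp [sum_mul_syz, Pi.single_apply]
  | zero => exact ⟨0, fun _ _ => rfl, fun _ => dvd_zero _, fun φ => by simp⟩
  | add x y _ _ hx hy =>
    obtain ⟨w, hw0, hwd, hw⟩ := hx
    obtain ⟨w', hw0', hwd', hw'⟩ := hy
    refine ⟨w + w', fun p hp => by simp [hw0 p hp, hw0' p hp], fun p => dvd_add (hwd p) (hwd' p),
      fun φ => ?_⟩
    simp only [Pi.add_apply, mul_add, Finset.sum_add_distrib, hw, hw']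
  | smul c x _ hx =>
    obtain ⟨w, hw0, hwd, hw⟩ := hx
    refine ⟨c • w, fun p hp => by simp [hw0 p hp], fun p => (hwd p).mul_left c, fun φ => ?_⟩
    simp only [Pi.smul_apply, smul_eq_mul, mul_left_comm _ c, ← Finset.mul_sum, hw]

end General

section Path

variable {n : ℕ} (a : Fin (n + 1) → σ →₀ ℕ)

theorem monomial_smul_syz_zero_mem_of_path
    {N : Submodule (MvPolynomial σ R) (Fin (n + 1) → MvPolynomial σ R)}
    {t : Fin (n + 1)} {L : σ →₀ ℕ} (hL0 : a 0 ≤ L) (hL : ∀ j, t ≤ j → a j ≤ L)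
    (hpath : ∀ i : Fin n, syz a i.castSucc i.succ ∈ N)
    (hlast : syz a 0 (Fin.last n) ∈ N) (k : Fin (n + 1)) (hk : t ≤ k) :
    monomial (L - (a 0 ⊔ a k)) (1 : R) • syz a 0 k ∈ N := by
  induction k using Fin.reverseInduction with
  | last => exact N.smul_mem _ hlast
  | cast i ih =>
    have hi : t ≤ i.succ := hk.trans (Fin.castSucc_le_succ i)
    rw [eq_sub_of_add_eq (monomial_smul_syz_eq_add a hL0 (hL _ hk) (hL _ hi)).symm]
    exact sub_mem (ih hi) (N.smul_mem _ (hpath i))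

variable (R) in
noncomputable def filtrationIdeal (t : Fin (n + 1)) : Ideal (MvPolynomial σ R) :=
  Ideal.span
    {monomial ((a 0 ⊔ (Finset.univ.filter fun i : Fin (n + 1) => (t : ℕ) ≤ (i : ℕ)).sup a)
        - (a 0 ⊔ a t)) 1,
      monomial (a 0 ⊔ a (t - 1) ⊔ a t - (a 0 ⊔ a t)) 1}

variable {P : Fin (n + 1) → Fin (n + 1) → Prop} {t : Fin (n + 1)}

theorem sum_cut_eq
    (hP : ∀ μ ν, P μ ν → (ν : ℕ) = μ + 1 ∨ ((μ : ℕ) = 0 ∧ (ν : ℕ) = n) ∨ ((μ : ℕ) = 0 ∧ ν < t))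
    (ht : 2 ≤ (t : ℕ)) {w : Fin (n + 1) × Fin (n + 1) → R} (hw : ∀ p, ¬ P p.1 p.2 → w p = 0)
    (i : Fin n) (hi : t ≤ i.succ) :
    ∑ p : Fin (n + 1) × Fin (n + 1),
        ((if i.succ ≤ p.2 then 1 else 0) - (if i.succ ≤ p.1 then 1 else 0)) * w p
      = w (i.castSucc, i.succ) + w (0, Fin.last n) := by
  rw [Fin.le_iff_val_le_val, Fin.val_succ] at hi
  rw [Fintype.sum_eq_add (i.castSucc, i.succ) (0, Fin.last n)
    (by simp [Prod.ext_iff, Fin.ext_iff]; omega)]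
  · simp [Fin.le_iff_val_le_val]
  · rintro ⟨μ, ν⟩ hne
    by_cases hμν : P μ ν
    · have hcross : i.succ ≤ ν ↔ i.succ ≤ μ := by
        simp only [Prod.ext_iff, Fin.ext_iff, ne_eq, Fin.val_castSucc, Fin.val_succ, Fin.val_last,
          Fin.val_zero] at hne
        have := hP μ ν hμν
        simp only [Fin.le_iff_val_le_val, Fin.val_succ, Fin.lt_def] at *
        omega
      simp [hcross]
    · simp [hw (μ, ν) hμν]

theorem flow_add_flow_zero_last_eq
    (hP : ∀ μ ν, P μ ν → (ν : ℕ) = μ + 1 ∨ ((μ : ℕ) = 0 ∧ (ν : ℕ) = n) ∨ ((μ : ℕ) = 0 ∧ ν < t))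
    (ht : 2 ≤ (t : ℕ)) {r : MvPolynomial σ R} {w : Fin (n + 1) × Fin (n + 1) → MvPolynomial σ R}
    (hw : ∀ p, ¬ P p.1 p.2 → w p = 0)
    (hflow : ∀ φ : Fin (n + 1) → MvPolynomial σ R,
      ∑ i, φ i * monomial (a i) 1 * (r • syz a 0 t) i = ∑ p, (φ p.2 - φ p.1) * w p)
    (i : Fin n) (hi : t ≤ i.succ) :
    w (i.castSucc, i.succ) + w (0, Fin.last n)
      = if i.succ ≤ t then r * monomial (a 0 ⊔ a t) 1 else 0 := by
  rw [← sum_cut_eq hP ht hw i hi, ← hflow fun j => if i.succ ≤ j then 1 else 0]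
  simp only [Pi.smul_apply, smul_eq_mul, mul_left_comm _ r, ← Finset.mul_sum, sum_mul_syz]
  simp only [Fin.le_iff_val_le_val, Fin.val_succ, Order.add_one_le_iff, nonpos_iff_eq_zero,
    Fin.succ_ne_zero, ↓reduceIte, sub_zero, ite_mul, one_mul, zero_mul, mul_ite, mul_zero]

theorem mem_ideal_span_of_smul_syz_mem [IsDomain R]
    (hP : ∀ μ ν, P μ ν → (ν : ℕ) = μ + 1 ∨ ((μ : ℕ) = 0 ∧ (ν : ℕ) = n) ∨ ((μ : ℕ) = 0 ∧ ν < t))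
    (ht : 2 ≤ (t : ℕ)) {r : MvPolynomial σ R} (hr : r • syz a 0 t ∈ syzSpan R a P) :
    r ∈ filtrationIdeal R a t := by
  obtain ⟨w, hw0, hwd, hflow⟩ := exists_flow_of_mem_syzSpan a hr
  have hcut := flow_add_flow_zero_last_eq a hP ht hw0 hflow
  obtain ⟨s, rfl⟩ := Fin.exists_succ_eq.2 (show t ≠ 0 by rintro rfl; simp at ht)
  rw [filtrationIdeal, Fin.succ_sub_one]
  have hlast : monomial ((a 0 ⊔ (Finset.univ.filter fun i : Fin (n + 1) =>
      (s.succ : ℕ) ≤ (i : ℕ)).sup a)) (1 : R) ∣ w (0, Fin.last n) := by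
    have h0 : monomial (a 0 ⊔ a (Fin.last n)) (1 : R) ∣ w (0, Fin.last n) := hwd (0, Fin.last n)
    refine monomial_one_sup_dvd (monomial_one_dvd_of_le le_sup_left h0)
      (monomial_one_finset_sup_dvd fun j hj => ?_)
    induction j using Fin.lastCases with
    | last => exact monomial_one_dvd_of_le le_sup_right h0
    | cast k =>
      have hk : s.succ < k.succ := by
        simp only [Finset.mem_filter, Finset.mem_univ, true_and, Fin.val_castSucc,
          Fin.val_succ] at hj
        rw [Fin.lt_def, Fin.val_succ, Fin.val_succ]
        omega
      have := hcut k hk.le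
      rw [if_neg hk.not_ge, add_eq_zero_iff_eq_neg] at this
      exact dvd_neg.1 (this ▸ monomial_one_dvd_of_le le_sup_left (hwd (k.castSucc, k.succ)))
  have hsum : r * monomial (a 0 ⊔ a s.succ) 1 = w (0, Fin.last n) + w (s.castSucc, s.succ) := by
    have h := hcut s le_rfl
    rw [if_pos le_rfl] at h
    rw [← h]
    exact add_comm _ _
  have hprev : monomial (a 0 ⊔ a s.castSucc ⊔ a s.succ) (1 : R) ∣ w (s.castSucc, s.succ) := by
    rw [sup_assoc]
    refine monomial_one_sup_dvd ?_ (hwd (s.castSucc, s.succ))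
    rw [eq_sub_of_add_eq' hsum.symm]
    exact dvd_sub (dvd_mul_of_dvd_right (monomial_one_dvd_monomial_one.2 le_sup_left) _)
      (monomial_one_dvd_of_le le_sup_left (hwd (0, Fin.last n)))
  exact mem_span_pair_of_mul_monomial_eq
    (sup_le le_sup_left (le_sup_of_le_right (Finset.le_sup (by simp))))
    (sup_le (le_sup_left.trans le_sup_left) le_sup_right) hlast hprev hsum

theorem nonempty_syzSpan_quotient_equiv [IsDomain R] {Q : Fin (n + 1) → Fin (n + 1) → Prop}
    (ht : 2 ≤ (t : ℕ)) (hQ : ∀ μ ν, Q μ ν → P μ ν ∨ (μ = 0 ∧ ν = t)) (hQt : Q 0 t)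
    (hP : ∀ μ ν, P μ ν → (ν : ℕ) = μ + 1 ∨ ((μ : ℕ) = 0 ∧ (ν : ℕ) = n) ∨ ((μ : ℕ) = 0 ∧ ν < t))
    (hpath : ∀ i : Fin n, P i.castSucc i.succ) (hlast : P 0 (Fin.last n)) (hprev : P 0 (t - 1)) :
    Nonempty ((syzSpan R a Q ⧸ (syzSpan R a P).comap (syzSpan R a Q).subtype) ≃ₗ[MvPolynomial σ R]
      MvPolynomial σ R ⧸ filtrationIdeal R a t) := by
  have hQle : syzSpan R a Q ≤ syzSpan R a P ⊔ MvPolynomial σ R ∙ syz a 0 t := by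
    refine Submodule.span_le.2 ?_
    rintro _ ⟨μ, ν, h, rfl⟩
    rcases hQ μ ν h with h | ⟨rfl, rfl⟩
    · exact Submodule.mem_sup_left (syz_mem_syzSpan a h)
    · exact Submodule.mem_sup_right (Submodule.mem_span_singleton_self _)
  have hcolon : (syzSpan R a P).comap (LinearMap.toSpanSingleton _ _ (syz a 0 t))
      = filtrationIdeal R a t := by
    refine le_antisymm (fun r hr => mem_ideal_span_of_smul_syz_mem a hP ht hr) (Ideal.span_le.2 ?_)
    rintro _ (rfl | rfl)
    · exact monomial_smul_syz_zero_mem_of_path a le_sup_left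
        (fun j hj => le_sup_of_le_right (Finset.le_sup (Finset.mem_filter.2 ⟨Finset.mem_univ j, hj⟩)))
        (fun i => syz_mem_syzSpan a (hpath i)) (syz_mem_syzSpan a hlast) t le_rfl
    · obtain ⟨s, rfl⟩ := Fin.exists_succ_eq.2 (show t ≠ 0 by rintro rfl; simp at ht)
      rw [Fin.succ_sub_one] at hprev ⊢
      exact smul_syz_mem_of_mem a (syz_mem_syzSpan a hprev) (syz_mem_syzSpan a (hpath s))
  rw [← hcolon]
  exact Submodule.nonempty_quotient_equiv_quotient_comap_toSpanSingleton
    (syz_mem_syzSpan a hQt) hQle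

end Path

end MonomialSyzygy

open MonomialSyzygy in
theorem stmt19_general {K : Type*} [Field K] (d m : ℕ) [NeZero m]
    (a : Fin m → (Fin d →₀ ℕ)) (t : Fin m)
    (ht2 : 2 ≤ (t : ℕ)) :
    (letI S := MvPolynomial (Fin d) K
     letI β : Fin m → Fin m → (Fin m → S) := fun μ ν =>
       Pi.single ν (monomial (a μ ⊔ a ν - a ν) (1 : K))
         - Pi.single μ (monomial (a μ ⊔ a ν - a μ) (1 : K))
     letI Fk : Submodule S (Fin m → S) := Submodule.span S
       { b | ∃ μ ν : Fin m,
           ((ν : ℕ) = (μ : ℕ) + 1 ∨ ((μ : ℕ) = 0 ∧ (ν : ℕ) = m - 1)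
             ∨ ((μ : ℕ) = 0 ∧ 2 ≤ (ν : ℕ) ∧ (ν : ℕ) ≤ (t : ℕ)))
           ∧ b = β μ ν }
     letI Fk1 : Submodule S (Fin m → S) := Submodule.span S
       { b | ∃ μ ν : Fin m,
           ((ν : ℕ) = (μ : ℕ) + 1 ∨ ((μ : ℕ) = 0 ∧ (ν : ℕ) = m - 1)
             ∨ ((μ : ℕ) = 0 ∧ 2 ≤ (ν : ℕ) ∧ (ν : ℕ) < (t : ℕ)))
           ∧ b = β μ ν }
     letI g1 : S := monomial
       ((a 0 ⊔ (Finset.univ.filter fun i : Fin m => (t : ℕ) ≤ (i : ℕ)).sup a)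
         - (a 0 ⊔ a t)) (1 : K)
     letI g2 : S := monomial ((a 0 ⊔ a (t - 1) ⊔ a t) - (a 0 ⊔ a t)) (1 : K)
     Nonempty ((Fk ⧸ Submodule.comap Fk.subtype Fk1) ≃ₗ[S]
       (S ⧸ (Ideal.span {g1, g2} : Ideal S)))) := by
  obtain ⟨n, rfl⟩ : ∃ n, m = n + 1 := ⟨m - 1, by omega⟩
  have ht0 : t ≠ 0 := by rintro rfl; simp at ht2
  refine nonempty_syzSpan_quotient_equiv a ht2 (fun μ ν h => ?_) (.inr (.inr ⟨rfl, ht2, le_rfl⟩))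
    (fun μ ν h => ?_) (fun i => .inl (by simp)) (.inr (.inl ⟨rfl, by simp⟩)) ?_
  · simp only [Fin.ext_iff, Fin.val_zero]
    omega
  · simp only [Fin.lt_def] at h ⊢
    omega
  · have h1 : ((t - 1 : Fin (n + 1)) : ℕ) = t - 1 := Fin.val_sub_one_of_ne_zero ht0
    have h0 : ((0 : Fin (n + 1)) : ℕ) = 0 := rfl
    omega

/-- Proposition 2.8(iii): for `m+1 ≤ k ≤ 2m−3` (0-indexed below via the letter `t` with
`τ_k = (0,t)`, `2 ≤ t ≤ m−2`), the quotient `F^k/F^{k−1}` of the filtration by the modules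
`F^k = ⟨β_1,…,β_k⟩` (adjacent transpositions, then `(0,m−1)`, then `(0,2),…,(0,t)`) is
isomorphic as an `S`-module to `S/I_k`, where
`I_k = ⟨ f^{0,t,t+1,…,m−1}/f^{0,t}, f^{0,t−1,t}/f^{0,t} ⟩`.
Here `a μ` is the exponent vector of the monomial `f^μ`, lcm's are sups of exponent vectors,
and `β_{(μ,ν)} = (f^{μ,ν}/f^ν) e_ν − (f^{μ,ν}/f^μ) e_μ`. -/
theorem stmt19 {K : Type*} [Field K] (d m : ℕ) (hm : 4 ≤ m) [NeZero m]
    (a : Fin m → (Fin d →₀ ℕ)) (t : Fin m)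
    (ht2 : 2 ≤ (t : ℕ)) (htm : (t : ℕ) ≤ m - 2) :
    (letI S := MvPolynomial (Fin d) K
     letI β : Fin m → Fin m → (Fin m → S) := fun μ ν =>
       Pi.single ν (monomial (a μ ⊔ a ν - a ν) (1 : K))
         - Pi.single μ (monomial (a μ ⊔ a ν - a μ) (1 : K))
     letI Fk : Submodule S (Fin m → S) := Submodule.span S
       { b | ∃ μ ν : Fin m,
           ((ν : ℕ) = (μ : ℕ) + 1 ∨ ((μ : ℕ) = 0 ∧ (ν : ℕ) = m - 1)
             ∨ ((μ : ℕ) = 0 ∧ 2 ≤ (ν : ℕ) ∧ (ν : ℕ) ≤ (t : ℕ)))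
           ∧ b = β μ ν }
     letI Fk1 : Submodule S (Fin m → S) := Submodule.span S
       { b | ∃ μ ν : Fin m,
           ((ν : ℕ) = (μ : ℕ) + 1 ∨ ((μ : ℕ) = 0 ∧ (ν : ℕ) = m - 1)
             ∨ ((μ : ℕ) = 0 ∧ 2 ≤ (ν : ℕ) ∧ (ν : ℕ) < (t : ℕ)))
           ∧ b = β μ ν }
     letI g1 : S := monomial
       ((a 0 ⊔ (Finset.univ.filter fun i : Fin m => (t : ℕ) ≤ (i : ℕ)).sup a)
         - (a 0 ⊔ a t)) (1 : K)
     letI g2 : S := monomial ((a 0 ⊔ a (t - 1) ⊔ a t) - (a 0 ⊔ a t)) (1 : K)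
     Nonempty ((Fk ⧸ Submodule.comap Fk.subtype Fk1) ≃ₗ[S]
       (S ⧸ (Ideal.span {g1, g2} : Ideal S)))) :=
  stmt19_general d m a t ht2
end
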